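/- arXiv:2511.08707 — 3 statements merged into one kernel-verified Lean document; each statement's English description precedes it below -/
import Mathlib

section
/- For any matrix Z ∈ ℝ^{d×m}, any orthogonal projection P, and any α > 0, the coding rate R(Z) = (1/2) log det(I + α Z Z^T) satisfies R(P Z) ≤ R(Z). -/
open Matrix

/-!
Orthogonality of `P` and `1 - P` splits the Gram matrix as
`Zᵀ Z = (P Z)ᵀ (P Z) + ((1 - P) Z)ᵀ ((1 - P) Z)`. By the Weinstein–Aronszajn identity both coding
rates may be computed from the `m × m` Gram matrices, and `det` is monotone under adding a
positive semidefinite matrix to a positive definite one, since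
`det (M + Bᵀ B) = det M * det (1 + B M⁻¹ Bᵀ)` and the second factor is at least `1`.
-/

namespace Matrix

variable {n : Type*} [Fintype n] [DecidableEq n]

theorem PosSemidef.one_le_det_one_add {N : Matrix n n ℝ} (hN : N.PosSemidef) :
    1 ≤ (1 + N).det := by
  set U : Matrix n n ℝ := ↑hN.1.eigenvectorUnitary
  have hU : U * star U = 1 := Unitary.mul_star_self_of_mem hN.1.eigenvectorUnitary.2
  have hdiag : 1 + N = U * (1 + diagonal hN.1.eigenvalues) * star U := by
    rw [mul_add, add_mul, mul_one, hU]
    congr 1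
    exact hN.1.spectral_theorem
  rw [hdiag, det_mul_right_comm, hU, one_mul, ← diagonal_one, diagonal_add, det_diagonal]
  exact Finset.one_le_prod fun i _ => le_add_of_nonneg_right (hN.eigenvalues_nonneg i)

theorem PosDef.det_le_det_add {M S : Matrix n n ℝ} (hM : M.PosDef) (hS : S.PosSemidef) :
    M.det ≤ (M + S).det := by
  open scoped MatrixOrder in
  obtain ⟨B, rfl⟩ := CStarAlgebra.nonneg_iff_eq_star_mul_self.mp hS.nonneg
  have hdet : IsUnit M.det := isUnit_iff_ne_zero.mpr hM.det_pos.ne'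
  have hfactor : (M + star B * B).det = M.det * (1 + B * M⁻¹ * Bᴴ).det := by
    rw [Matrix.mul_assoc B, det_one_add_mul_comm, ← det_mul, mul_add, mul_one,
      ← Matrix.mul_assoc, ← Matrix.mul_assoc, mul_nonsing_inv _ hdet, one_mul,
      star_eq_conjTranspose]
  have hpsd : (B * M⁻¹ * Bᴴ).PosSemidef := hM.inv.posSemidef.mul_mul_conjTranspose_same B
  rw [hfactor]
  exact le_mul_of_one_le_right hM.det_pos.le hpsd.one_le_det_one_add

theorem transpose_mul_self_eq_add_of_isProj {d m : Type*} [Fintype d] [DecidableEq d]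
    {P : Matrix d d ℝ} (hP2 : P * P = P) (hPT : Pᵀ = P) (Z : Matrix d m ℝ) :
    Zᵀ * Z = (P * Z)ᵀ * (P * Z) + ((1 - P) * Z)ᵀ * ((1 - P) * Z) := by
  have hQ2 : (1 - P) * (1 - P) = 1 - P := by
    rw [mul_sub, mul_one, sub_mul, one_mul, hP2, sub_self, sub_zero]
  simp only [transpose_mul, transpose_sub, transpose_one, hPT, Matrix.mul_assoc,
    ← Matrix.mul_assoc P, ← Matrix.mul_assoc (1 - P), hP2, hQ2, ← Matrix.mul_add]
  rw [← Matrix.add_mul, add_sub_cancel, Matrix.one_mul]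

theorem det_one_add_smul_mul_transpose {d m : Type*} [Fintype d] [DecidableEq d] [Fintype m]
    [DecidableEq m] (α : ℝ) (A : Matrix d m ℝ) :
    (1 + α • (A * Aᵀ)).det = (1 + α • (Aᵀ * A)).det := by
  rw [← Matrix.smul_mul, det_one_add_mul_comm, Matrix.mul_smul]

theorem posSemidef_smul_transpose_mul_self {d m : Type*} [Fintype d] [Finite m] {α : ℝ}
    (hα : 0 ≤ α) (A : Matrix d m ℝ) : (α • (Aᵀ * A)).PosSemidef :=
  (posSemidef_conjTranspose_mul_self A).smul hα

end Matrix

/-- For any `Z : ℝ^{d×m}`, orthogonal projection `P`, and `α > 0`, the coding rate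
`R(Z) = (1/2) log det (I + α Z Zᵀ)` satisfies `R(P Z) ≤ R(Z)`. -/
theorem coding_rate_proj_le {d m : ℕ} (Z : Matrix (Fin d) (Fin m) ℝ)
    (P : Matrix (Fin d) (Fin d) ℝ) (hP2 : P * P = P) (hPT : Pᵀ = P)
    (α : ℝ) (hα : 0 < α) :
    (1/2) * Real.log (1 + α • ((P * Z) * (P * Z)ᵀ)).det ≤
      (1/2) * Real.log (1 + α • (Z * Zᵀ)).det := by
  have hM : (1 + α • ((P * Z)ᵀ * (P * Z))).PosDef :=
    PosDef.one.add_posSemidef (posSemidef_smul_transpose_mul_self hα.le _)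
  have hdet : (1 + α • ((P * Z)ᵀ * (P * Z))).det ≤ (1 + α • (Zᵀ * Z)).det := by
    rw [transpose_mul_self_eq_add_of_isProj hP2 hPT Z, smul_add, ← add_assoc]
    exact hM.det_le_det_add (posSemidef_smul_transpose_mul_self hα.le _)
  rw [det_one_add_smul_mul_transpose, det_one_add_smul_mul_transpose]
  gcongr
  exact hM.det_pos
end

section
/- Let Z ∈ ℝ^{d×m}, P an orthogonal projection, α = d/(m ε²) for ε > 0, and R(Z) = (1/2) log det(I + α Z Z^T). Then 0 ≤ R(Z) − R(P Z) ≤ (1/2)·(d/(m ε²))·‖(I − P) Z‖_F². -/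
open Matrix BigOperators

/-- The squared Frobenius norm of a matrix. -/
def frobSq {d m : ℕ} (M : Matrix (Fin d) (Fin m) ℝ) : ℝ := ∑ i, ∑ j, (M i j)^2

/-- The coding rate `R(Z) = (1/2) log det (I + (d/(m ε²)) Z Zᵀ)`. -/
noncomputable def codingRate {d m : ℕ} (ε : ℝ) (Z : Matrix (Fin d) (Fin m) ℝ) : ℝ :=
  (1/2) * Real.log (1 + ((d : ℝ) / (m * ε^2)) • (Z * Zᵀ)).det

/-!
By Sylvester's identity `2 R(Z) = log det (1 + α ZᵀZ)`, and since `P` is an orthogonal projection,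
`α ZᵀZ = A + B` with `A = α (PZ)ᵀ(PZ)` and `B = α ((1 - P)Z)ᵀ((1 - P)Z)` positive semidefinite.
Then `det (1 + A + B) = det (1 + A) · det (1 + M)` for some positive semidefinite `M` with
`tr M ≤ tr B = α ‖(1 - P)Z‖_F²`, and `0 ≤ log det (1 + M) ≤ tr M` follows eigenvalue by eigenvalue
from `0 ≤ log (1 + λ) ≤ λ`.
-/

namespace Matrix

variable {n : Type*} [Fintype n] [DecidableEq n]

theorem conjTranspose_mul_self_eq_add_of_isStarProjection {m R : Type*} [Ring R] [StarRing R]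
    {P : Matrix n n R} (hP : IsStarProjection P) (Z : Matrix n m R) :
    Zᴴ * Z = (P * Z)ᴴ * (P * Z) + ((1 - P) * Z)ᴴ * ((1 - P) * Z) := by
  have hproj {Q : Matrix n n R} (hQ : IsStarProjection Q) :
      (Q * Z)ᴴ * (Q * Z) = Zᴴ * (Q * Z) := by
    rw [conjTranspose_mul, ← star_eq_conjTranspose, hQ.isSelfAdjoint.star_eq, Matrix.mul_assoc,
      ← Matrix.mul_assoc Q, hQ.isIdempotentElem.eq]
  rw [hproj hP, hproj hP.one_sub, ← Matrix.mul_add, ← Matrix.add_mul, add_sub_cancel,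
    Matrix.one_mul]

theorem IsHermitian.det_one_add {M : Matrix n n ℝ} (hM : M.IsHermitian) :
    (1 + M).det = ∏ i, (1 + hM.eigenvalues i) := by
  have h : 1 + M = cfc (fun x : ℝ => 1 + x) M := by
    rw [cfc_add .., cfc_const_one .., cfc_id' ..]
  rw [h, hM.cfc_eq]
  simp [IsHermitian.cfc, -Unitary.conjStarAlgAut_apply]

namespace PosSemidef

variable {A B M : Matrix n n ℝ}

theorem one_le_det_one_add_s8 (hM : M.PosSemidef) : 1 ≤ (1 + M).det := by
  rw [hM.isHermitian.det_one_add]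
  exact Finset.one_le_prod fun i _ => le_add_of_nonneg_right (hM.eigenvalues_nonneg i)

theorem log_det_one_add_le_trace (hM : M.PosSemidef) : Real.log (1 + M).det ≤ M.trace := by
  have hpos i : 0 < 1 + hM.isHermitian.eigenvalues i := by
    linarith [hM.eigenvalues_nonneg i]
  rw [hM.isHermitian.det_one_add, hM.isHermitian.trace_eq_sum_eigenvalues,
    Real.log_prod fun i _ => (hpos i).ne']
  refine Finset.sum_le_sum fun i _ => ?_
  simpa using Real.log_le_sub_one_of_pos (hpos i)

theorem one_sub_inv_one_add (hA : A.PosSemidef) : (1 - (1 + A)⁻¹).PosSemidef := by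
  have hY : IsUnit (1 + A).det := (PosDef.one.add_posSemidef hA).det_pos.ne'.isUnit
  have hYinv : ((1 + A)⁻¹)ᴴ = (1 + A)⁻¹ := (isHermitian_one.add hA.isHermitian).inv
  have h : 1 - (1 + A)⁻¹ = (1 + A)⁻¹ * (A + Aᴴ * A) * ((1 + A)⁻¹)ᴴ := by
    calc 1 - (1 + A)⁻¹ = (1 + A)⁻¹ * ((1 + A) * (1 + A) - (1 + A)) * (1 + A)⁻¹ := by
          simp only [mul_sub, sub_mul, ← mul_assoc, nonsing_inv_mul _ hY, one_mul,
            mul_nonsing_inv _ hY]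
      _ = _ := by rw [hYinv, hA.isHermitian.eq]; noncomm_ring
  rw [h]
  exact (hA.add (posSemidef_conjTranspose_mul_self A)).mul_mul_conjTranspose_same _

open scoped MatrixOrder in
/-- Take `M = G (1 + A)⁻¹ G` with `G = √B`: Sylvester's identity gives the determinant, and
`(1 + A)⁻¹ ≤ 1` the trace bound. -/
theorem exists_det_one_add_add_eq (hA : A.PosSemidef) (hB : B.PosSemidef) :
    ∃ M : Matrix n n ℝ, M.PosSemidef ∧ M.trace ≤ B.trace ∧
      (1 + A + B).det = (1 + A).det * (1 + M).det := by
  obtain ⟨G, hG, -, rfl⟩ :=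
    CFC.exists_sqrt_of_isSelfAdjoint_of_quasispectrumRestricts hB.isHermitian
      (QuasispectrumRestricts.nnreal_of_nonneg hB.nonneg)
  have hY : IsUnit (1 + A).det := (PosDef.one.add_posSemidef hA).det_pos.ne'.isUnit
  have hGH : Gᴴ = G := hG.star_eq
  refine ⟨G * (1 + A)⁻¹ * G, ?_, ?_, ?_⟩
  · have h := (PosDef.one.add_posSemidef hA).inv.posSemidef.mul_mul_conjTranspose_same G
    rwa [hGH] at h
  · have h := (hA.one_sub_inv_one_add.mul_mul_conjTranspose_same G).trace_nonneg
    rw [hGH, mul_sub, mul_one, sub_mul, trace_sub] at h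
    linarith
  · calc (1 + A + G * G).det = ((1 + A) * (1 + (1 + A)⁻¹ * G * G)).det := by
          rw [mul_add, mul_one, ← mul_assoc, ← mul_assoc, mul_nonsing_inv _ hY, one_mul]
      _ = (1 + A).det * (1 + G * (1 + A)⁻¹ * G).det := by
          rw [det_mul, det_one_add_mul_comm, ← mul_assoc]

theorem log_det_one_add_add_sub_log_det_one_add_mem_Icc (hA : A.PosSemidef)
    (hB : B.PosSemidef) :
    Real.log (1 + A + B).det - Real.log (1 + A).det ∈ Set.Icc 0 B.trace := by
  obtain ⟨M, hM, hMB, hdet⟩ := exists_det_one_add_add_eq hA hB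
  have hMdet : 0 < (1 + M).det := zero_lt_one.trans_le hM.one_le_det_one_add_s8
  rw [hdet, Real.log_mul (PosDef.one.add_posSemidef hA).det_pos.ne' hMdet.ne',
    add_sub_cancel_left]
  exact ⟨Real.log_nonneg hM.one_le_det_one_add_s8, hM.log_det_one_add_le_trace.trans hMB⟩

end PosSemidef

end Matrix

theorem frobSq_eq_trace_transpose_mul_self {d m : ℕ} (M : Matrix (Fin d) (Fin m) ℝ) :
    frobSq M = (Mᵀ * M).trace := by
  simp only [frobSq, trace, diag, mul_apply, transpose_apply, pow_two]
  exact Finset.sum_comm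

theorem codingRate_eq_log_det_transpose_mul_self {d m : ℕ} (ε : ℝ)
    (Z : Matrix (Fin d) (Fin m) ℝ) :
    codingRate ε Z = (1/2) * Real.log (1 + ((d : ℝ) / (m * ε^2)) • (Zᵀ * Z)).det := by
  rw [codingRate, ← Matrix.smul_mul, det_one_add_mul_comm, Matrix.mul_smul]

theorem coding_rate_change_bound_general {d m : ℕ}
    (Z : Matrix (Fin d) (Fin m) ℝ) (P : Matrix (Fin d) (Fin d) ℝ)
    (hP2 : P * P = P) (hPT : Pᵀ = P) (ε : ℝ) :
    0 ≤ codingRate ε Z - codingRate ε (P * Z) ∧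
    codingRate ε Z - codingRate ε (P * Z) ≤
      (1/2) * ((d : ℝ) / (m * ε^2)) * frobSq ((1 - P) * Z) := by
  set α : ℝ := (d : ℝ) / (m * ε^2)
  have hα : 0 ≤ α := by positivity
  have hP : IsStarProjection P := ⟨hP2, hPT⟩
  have hgram :
      α • (Zᵀ * Z) = α • ((P * Z)ᵀ * (P * Z)) + α • (((1 - P) * Z)ᵀ * ((1 - P) * Z)) := by
    simpa only [conjTranspose_eq_transpose_of_trivial, smul_add] using
      congrArg (α • ·) (conjTranspose_mul_self_eq_add_of_isStarProjection hP Z)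
  have hgram_psd (W : Matrix (Fin d) (Fin m) ℝ) : (α • (Wᵀ * W)).PosSemidef := by
    simpa only [conjTranspose_eq_transpose_of_trivial] using
      (posSemidef_conjTranspose_mul_self W).smul hα
  obtain ⟨hlower, hupper⟩ :=
    PosSemidef.log_det_one_add_add_sub_log_det_one_add_mem_Icc (hgram_psd (P * Z))
      (hgram_psd ((1 - P) * Z))
  rw [add_assoc, ← hgram] at hlower hupper
  rw [trace_smul, smul_eq_mul, ← frobSq_eq_trace_transpose_mul_self] at hupper
  simp only [codingRate_eq_log_det_transpose_mul_self]
  constructor <;> linarith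

/-- For `Z : ℝ^{d×m}`, an orthogonal projection `P`, and `ε > 0`:
`0 ≤ R(Z) - R(P Z) ≤ (1/2) (d/(m ε²)) ‖(I - P) Z‖_F²`. -/
theorem coding_rate_change_bound {d m : ℕ} (hm : 0 < m)
    (Z : Matrix (Fin d) (Fin m) ℝ) (P : Matrix (Fin d) (Fin d) ℝ)
    (hP2 : P * P = P) (hPT : Pᵀ = P) (ε : ℝ) (hε : 0 < ε) :
    0 ≤ codingRate ε Z - codingRate ε (P * Z) ∧
    codingRate ε Z - codingRate ε (P * Z) ≤
      (1/2) * ((d : ℝ) / (m * ε^2)) * frobSq ((1 - P) * Z) :=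
  coding_rate_change_bound_general Z P hP2 hPT ε
end

section
/- For two d×r matrices U, V with orthonormal columns, there exists an orthogonal r×r matrix O such that ‖U O − V‖ ≤ √2 · ‖sin Θ(U, V)‖, where sin Θ(U,V) is the diagonal matrix of sines of principal angles between the column spaces, and ‖·‖ is the spectral norm. -/
/-!
Write `M = Uᵀ V` and diagonalize `Mᵀ M = W diag(μ) Wᵀ`. The columns of `M W` are orthogonal with
squared lengths `μᵢ`, so `M W = B diag(√μ)` for an orthogonal `B`; with `O = B Wᵀ` this is the
polar decomposition `Oᵀ M = W diag(√μ) Wᵀ`. As `U O` and `V` both have orthonormal columns,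
`‖(U O - V) x‖² = 2 ‖x‖² - 2 xᵀ Oᵀ M x`. The `√μᵢ = cos θᵢ` lie in `[0, 1]`, hence
`√μᵢ ≥ μᵢ ≥ σ_min²`, which gives `‖(U O - V) x‖² ≤ 2 (1 - σ_min²) ‖x‖²`.
-/

open Matrix BigOperators

/-- Eigenvalues of a Hermitian real matrix listed in descending order:
`eigDesc hA 0` is the largest. -/
noncomputable def eigDesc {n : ℕ} {A : Matrix (Fin n) (Fin n) ℝ} (hA : A.IsHermitian)
    (i : Fin n) : ℝ :=
  (hA.eigenvalues ∘ Tuple.sort hA.eigenvalues) i.rev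

/-- Singular values of a real `m × n` matrix in descending order, defined as the square
roots of the descending eigenvalues of `Mᵀ M` (indexed by the columns). -/
noncomputable def singDesc {m n : ℕ} (M : Matrix (Fin m) (Fin n) ℝ) (k : Fin n) : ℝ :=
  Real.sqrt (eigDesc (Matrix.isHermitian_conjTranspose_mul_self M) k)

/-- Singular values of a real `m × n` matrix in descending order, defined as the square
roots of the descending eigenvalues of `M Mᵀ` (indexed by the rows). -/
noncomputable def singDescRow {m n : ℕ} (M : Matrix (Fin m) (Fin n) ℝ) (k : Fin m) : ℝ :=
  Real.sqrt (eigDesc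
    (by simpa [Matrix.conjTranspose_eq_transpose_of_trivial] using Matrix.isHermitian_mul_conjTranspose_self M :
      (M * Mᵀ).IsHermitian) k)

/-- The spectral (ℓ²-operator) norm of a real matrix. -/
noncomputable def specNorm {m n : Type*} [Fintype m] [Fintype n] [DecidableEq n]
    (A : Matrix m n ℝ) : ℝ :=
  ‖LinearMap.toContinuousLinearMap (Matrix.toEuclideanLin A)‖

theorem EuclideanSpace.norm_eq_sqrt_dotProduct {n : Type*} [Fintype n]
    (x : EuclideanSpace ℝ n) : ‖x‖ = √(x.ofLp ⬝ᵥ x.ofLp) := by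
  rw [norm_eq_sqrt_real_inner, EuclideanSpace.inner_eq_star_dotProduct, star_trivial,
    dotProduct_comm]

theorem iInf_singDesc_le_sqrt_eigenvalues {m n : ℕ} (M : Matrix (Fin m) (Fin n) ℝ) (i : Fin n) :
    ⨅ k, singDesc M k ≤ √((isHermitian_conjTranspose_mul_self M).eigenvalues i) := by
  set hA := isHermitian_conjTranspose_mul_self M
  calc ⨅ k, singDesc M k ≤ singDesc M ((Tuple.sort hA.eigenvalues).symm i).rev :=
        ciInf_le (Set.finite_range _).bddBelow _
    _ = _ := by simp [singDesc, eigDesc]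

namespace Matrix

section Rectangular

variable {m n p : Type*} [Fintype m] [Fintype n] [Fintype p]

theorem mulVec_dotProduct_mulVec {R : Type*} [CommSemiring R] (A : Matrix m n R)
    (B : Matrix m p R) (x : n → R) (y : p → R) :
    (A *ᵥ x) ⬝ᵥ (B *ᵥ y) = x ⬝ᵥ ((Aᵀ * B) *ᵥ y) := by
  rw [← mulVec_mulVec, dotProduct_mulVec x, vecMul_transpose]

theorem specNorm_le_sqrt_of_mulVec_dotProduct_self_le [DecidableEq n] (A : Matrix m n ℝ)
    (c : ℝ) (h : ∀ x, (A *ᵥ x) ⬝ᵥ (A *ᵥ x) ≤ c * (x ⬝ᵥ x)) : specNorm A ≤ √c := by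
  refine ContinuousLinearMap.opNorm_le_bound _ (Real.sqrt_nonneg c) fun x => ?_
  rw [EuclideanSpace.norm_eq_sqrt_dotProduct, EuclideanSpace.norm_eq_sqrt_dotProduct,
    ← Real.sqrt_mul' c (by simpa using dotProduct_star_self_nonneg x.ofLp)]
  exact Real.sqrt_le_sqrt (h x.ofLp)

variable [DecidableEq n]

theorem mulVec_dotProduct_self_of_transpose_mul_self {A : Matrix m n ℝ} (hA : Aᵀ * A = 1)
    (x : n → ℝ) : (A *ᵥ x) ⬝ᵥ (A *ᵥ x) = x ⬝ᵥ x := by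
  rw [mulVec_dotProduct_mulVec, hA, one_mulVec]

theorem sub_mulVec_dotProduct_self {A B : Matrix m n ℝ} (hA : Aᵀ * A = 1) (hB : Bᵀ * B = 1)
    (x : n → ℝ) :
    ((A - B) *ᵥ x) ⬝ᵥ ((A - B) *ᵥ x) = 2 * (x ⬝ᵥ x) - 2 * (x ⬝ᵥ ((Aᵀ * B) *ᵥ x)) := by
  have hBA : (B *ᵥ x) ⬝ᵥ (A *ᵥ x) = (A *ᵥ x) ⬝ᵥ (B *ᵥ x) := dotProduct_comm _ _
  rw [sub_mulVec, sub_dotProduct, dotProduct_sub, dotProduct_sub, hBA,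
    mulVec_dotProduct_self_of_transpose_mul_self hA,
    mulVec_dotProduct_self_of_transpose_mul_self hB, mulVec_dotProduct_mulVec]
  ring

theorem transpose_mulVec_dotProduct_self_le {U : Matrix m n ℝ} (hU : Uᵀ * U = 1)
    (z : m → ℝ) : (Uᵀ *ᵥ z) ⬝ᵥ (Uᵀ *ᵥ z) ≤ z ⬝ᵥ z := by
  -- Pythagoras for the orthogonal projection `q = U Uᵀ z` of `z`
  set q := U *ᵥ (Uᵀ *ᵥ z)
  have hzq : z ⬝ᵥ q = (Uᵀ *ᵥ z) ⬝ᵥ (Uᵀ *ᵥ z) := by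
    rw [dotProduct_mulVec, ← mulVec_transpose]
  have hqq : q ⬝ᵥ q = (Uᵀ *ᵥ z) ⬝ᵥ (Uᵀ *ᵥ z) := mulVec_dotProduct_self_of_transpose_mul_self hU _
  have hzqq : (z - q) ⬝ᵥ (z - q) = z ⬝ᵥ z - 2 * (z ⬝ᵥ q) + q ⬝ᵥ q := by
    rw [sub_dotProduct, dotProduct_sub, dotProduct_sub, dotProduct_comm q z]
    ring
  have hnonneg : 0 ≤ (z - q) ⬝ᵥ (z - q) := by simpa using dotProduct_star_self_nonneg (z - q)
  linarith

end Rectangular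

theorem IsHermitian.eigenvalues_le {n : Type*} [Fintype n] [DecidableEq n] {A : Matrix n n ℝ}
    (hA : A.IsHermitian) {c : ℝ} (h : ∀ x, x ⬝ᵥ (A *ᵥ x) ≤ c * (x ⬝ᵥ x)) (i : n) :
    hA.eigenvalues i ≤ c := by
  have hunit : (hA.eigenvectorBasis i).ofLp ⬝ᵥ (hA.eigenvectorBasis i).ofLp = 1 := by
    rw [← star_trivial (hA.eigenvectorBasis i).ofLp, dotProduct_comm,
      ← EuclideanSpace.inner_eq_star_dotProduct]
    simp
  simpa [hA.eigenvalues_eq i, hunit] using h (hA.eigenvectorBasis i)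

theorem eigenvalues_transpose_mul_le_one {m n p : Type*} [Fintype m] [Fintype n]
    [Fintype p] [DecidableEq n] [DecidableEq p] {U : Matrix m n ℝ} {V : Matrix m p ℝ}
    (hU : Uᵀ * U = 1) (hV : Vᵀ * V = 1) (hA : ((Uᵀ * V)ᴴ * (Uᵀ * V)).IsHermitian) (i : p) :
    hA.eigenvalues i ≤ 1 :=
  hA.eigenvalues_le (fun x => by
    rw [conjTranspose_eq_transpose_of_trivial, ← mulVec_dotProduct_mulVec, ← mulVec_mulVec,
      one_mul, ← mulVec_dotProduct_self_of_transpose_mul_self hV x]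
    exact transpose_mulVec_dotProduct_self_le hU _) i

section Square

variable {n : Type*} [Fintype n] [DecidableEq n]

theorem transpose_mul_self_of_mem_unitaryGroup {A : Matrix n n ℝ} (hA : A ∈ unitaryGroup n ℝ) :
    Aᵀ * A = 1 := by
  simpa [star_eq_conjTranspose, conjTranspose_eq_transpose_of_trivial] using
    mem_unitaryGroup_iff'.mp hA

theorem exists_orthogonal_mul_diagonal_sqrt_eq (N : Matrix n n ℝ) (μ : n → ℝ)
    (h : Nᵀ * N = diagonal μ) :
    ∃ B : Matrix n n ℝ, Bᵀ * B = 1 ∧ B * diagonal (fun i => √(μ i)) = N := by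
  have hcol : ∀ i j, Nᵀ i ⬝ᵥ Nᵀ j = if i = j then μ i else 0 := fun i j =>
    (congrFun₂ h i j).trans (diagonal_apply μ i j)
  have hμ : ∀ i, 0 ≤ μ i := fun i => by
    simpa [hcol] using dotProduct_star_self_nonneg (Nᵀ i)
  -- normalize the nonzero columns and extend them to an orthonormal basis: the columns of `B`
  let v : n → EuclideanSpace ℝ n := fun i => WithLp.toLp 2 ((√(μ i))⁻¹ • Nᵀ i)
  have hv : Orthonormal ℝ ({i | μ i ≠ 0}.domRestrict v) := by
    rw [orthonormal_iff_ite]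
    rintro ⟨i, hi⟩ ⟨j, hj⟩
    simp only [Set.domRestrict_apply, v, EuclideanSpace.inner_eq_star_dotProduct, star_trivial,
      smul_dotProduct, dotProduct_smul, hcol, Subtype.mk.injEq, smul_eq_mul]
    split_ifs with hji hij hij
    · subst hji
      rw [← mul_assoc, ← mul_inv, Real.mul_self_sqrt (hμ j), inv_mul_cancel₀ hj]
    · exact absurd hji.symm hij
    · exact absurd hij.symm hji
    · simp
  obtain ⟨b, hb⟩ := hv.exists_orthonormalBasis_extension_of_card_eq finrank_euclideanSpace
  refine ⟨(EuclideanSpace.basisFun n ℝ).toBasis.toMatrix b.toBasis,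
    transpose_mul_self_of_mem_unitaryGroup
      ((EuclideanSpace.basisFun n ℝ).toMatrix_orthonormalBasis_mem_unitary b), ?_⟩
  ext k i
  simp only [mul_diagonal, Module.Basis.toMatrix_apply, OrthonormalBasis.coe_toBasis]
  by_cases hi : μ i = 0
  · have hNi : Nᵀ i = 0 := dotProduct_self_eq_zero.mp (by simpa [hcol] using hi)
    simpa [hi] using (congrFun hNi k).symm
  · rw [hb i hi]
    have : √(μ i) ≠ 0 := Real.sqrt_ne_zero'.mpr ((hμ i).lt_of_ne' hi)
    simp only [v, WithLp.toLp_smul, map_smul, Finsupp.coe_smul, Pi.smul_apply,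
      OrthonormalBasis.coe_toBasis_repr_apply, EuclideanSpace.basisFun_repr, transpose_apply,
      smul_eq_mul]
    field_simp

theorem exists_polar_decomposition (M : Matrix n n ℝ) (hA : (Mᴴ * M).IsHermitian) :
    ∃ O : Matrix n n ℝ, Oᵀ * O = 1 ∧
      Oᵀ * M = (hA.eigenvectorUnitary : Matrix n n ℝ) * diagonal (fun i => √(hA.eigenvalues i)) *
        (hA.eigenvectorUnitary : Matrix n n ℝ)ᵀ := by
  set W : Matrix n n ℝ := ↑hA.eigenvectorUnitary
  have hWtW : Wᵀ * W = 1 := transpose_mul_self_of_mem_unitaryGroup hA.eigenvectorUnitary.2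
  have hWWt : W * Wᵀ = 1 := mul_eq_one_comm.mp hWtW
  have hspec : Mᵀ * M = W * diagonal hA.eigenvalues * Wᵀ := by
    conv_lhs => rw [← conjTranspose_eq_transpose_of_trivial, hA.spectral_theorem]
    simp [W, star_eq_conjTranspose, conjTranspose_eq_transpose_of_trivial]
  obtain ⟨B, hB, hBMW⟩ := exists_orthogonal_mul_diagonal_sqrt_eq (M * W) hA.eigenvalues (by
    rw [transpose_mul, Matrix.mul_assoc, ← Matrix.mul_assoc Mᵀ, hspec]
    simp only [Matrix.mul_assoc, hWtW, Matrix.mul_one, ← Matrix.mul_assoc Wᵀ, Matrix.one_mul])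
  refine ⟨B * Wᵀ, ?_, ?_⟩
  · rw [transpose_mul, transpose_transpose, Matrix.mul_assoc, ← Matrix.mul_assoc Bᵀ, hB,
      Matrix.one_mul, hWWt]
  · calc (B * Wᵀ)ᵀ * M = W * Bᵀ * (M * W * Wᵀ) := by
          rw [transpose_mul, transpose_transpose, Matrix.mul_assoc M, hWWt, Matrix.mul_one]
      _ = W * (Bᵀ * B) * diagonal (fun i => √(hA.eigenvalues i)) * Wᵀ := by
          simp only [← hBMW, Matrix.mul_assoc]
      _ = _ := by rw [hB, Matrix.mul_one]

theorem mul_dotProduct_self_le_dotProduct_mulVec {W : Matrix n n ℝ} (hW : Wᵀ * W = 1)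
    {d : n → ℝ} {c : ℝ} (h : ∀ i, c ≤ d i) (x : n → ℝ) :
    c * (x ⬝ᵥ x) ≤ x ⬝ᵥ ((W * diagonal d * Wᵀ) *ᵥ x) := by
  have hquad : x ⬝ᵥ ((W * diagonal d * Wᵀ) *ᵥ x) =
      ∑ i, d i * ((Wᵀ *ᵥ x) i * (Wᵀ *ᵥ x) i) := by
    rw [Matrix.mul_assoc, ← transpose_transpose W, ← mulVec_dotProduct_mulVec,
      transpose_transpose, ← mulVec_mulVec]
    simp only [dotProduct, mulVec_diagonal]
    exact Finset.sum_congr rfl fun i _ => by ring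
  have hnorm : (Wᵀ *ᵥ x) ⬝ᵥ (Wᵀ *ᵥ x) = x ⬝ᵥ x :=
    mulVec_dotProduct_self_of_transpose_mul_self
      (by rw [transpose_transpose, mul_eq_one_comm.mp hW]) x
  rw [hquad, ← hnorm, dotProduct, Finset.mul_sum]
  exact Finset.sum_le_sum fun i _ => mul_le_mul_of_nonneg_right (h i) (mul_self_nonneg _)

end Square

end Matrix

/-- Orthogonal Procrustes alignment: for `U, V ∈ ℝ^{d×r}` with orthonormal columns there
is an orthogonal `O ∈ ℝ^{r×r}` with `‖U O - V‖ ≤ √2 ‖sin Θ(U,V)‖`, where the spectral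
norm of `sin Θ(U,V)` is `√(1 - σ_min(Uᵀ V)²)` (sine of the largest principal angle). -/
theorem procrustes_sin_theta_bound {d r : ℕ}
    (U V : Matrix (Fin d) (Fin r) ℝ) (hU : Uᵀ * U = 1) (hV : Vᵀ * V = 1) :
    ∃ O : Matrix (Fin r) (Fin r) ℝ, Oᵀ * O = 1 ∧
      specNorm (U * O - V) ≤
        Real.sqrt 2 * Real.sqrt (1 - (⨅ k : Fin r, singDesc (Uᵀ * V) k)^2) := by
  set hA := isHermitian_conjTranspose_mul_self (Uᵀ * V)
  set s := ⨅ k, singDesc (Uᵀ * V) k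
  obtain ⟨O, hO, hOM⟩ := exists_polar_decomposition (Uᵀ * V) hA
  have hs : ∀ i, s ^ 2 ≤ √(hA.eigenvalues i) := fun i => by
    have hs0 : 0 ≤ s := Real.iInf_nonneg fun k => Real.sqrt_nonneg _
    have hsμ : s ≤ √(hA.eigenvalues i) := iInf_singDesc_le_sqrt_eigenvalues _ i
    have hμ1 : √(hA.eigenvalues i) ≤ 1 :=
      Real.sqrt_le_one.mpr (eigenvalues_transpose_mul_le_one hU hV hA i)
    nlinarith
  have hUO : (U * O)ᵀ * (U * O) = 1 := by
    rw [transpose_mul, Matrix.mul_assoc, ← Matrix.mul_assoc Uᵀ, hU, Matrix.one_mul, hO]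
  refine ⟨O, hO, ?_⟩
  rw [← Real.sqrt_mul zero_le_two]
  refine specNorm_le_sqrt_of_mulVec_dotProduct_self_le _ _ fun x => ?_
  have hquad := mul_dotProduct_self_le_dotProduct_mulVec
    (transpose_mul_self_of_mem_unitaryGroup hA.eigenvectorUnitary.2) hs x
  rw [sub_mulVec_dotProduct_self hUO hV, transpose_mul, Matrix.mul_assoc, hOM]
  linarith
end
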